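/- arXiv:1811.05015 — 4 statements merged into one kernel-verified Lean document; each statement's English description precedes it below -/
import Mathlib

section
/- For a team of size n and any feature with value counts (r_1, …, r_L) summing to n, the number of conflict triangles Σ_j C(r_j,2)(n − r_j) is at most C(⌈n/2⌉,2)·⌊n/2⌋ + C(⌊n/2⌋,2)·⌈n/2⌉, i.e., the maximum over all value distributions is attained by a split into two groups of sizes ⌈n/2⌉ and ⌊n/2⌋. -/
open Finset

/-!
Twice the contribution of a group of size `r` is `r (r - 1) (n - r) = r (n - r) · (r - 1)`, and
`r (n - r) ≤ ⌈n/2⌉ ⌊n/2⌋`. Summing, twice the count is at most `⌈n/2⌉ ⌊n/2⌋ · ∑ (r_j - 1)`,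
and `∑ (r_j - 1) = n - #{j | r_j ≠ 0} ≤ n - 2` as soon as two groups are nonempty; this is twice
the balanced value. With at most one nonempty group the count is `0`.
-/

namespace Nat

theorem two_mul_choose_two (m : ℕ) : 2 * m.choose 2 = m * (m - 1) := by
  rw [choose_two_right, mul_comm, div_two_mul_two_of_even (even_mul_pred_self m)]

theorem two_mul_choose_two_mul_add_choose_two_mul (a b : ℕ) :
    2 * (a.choose 2 * b + b.choose 2 * a) = a * b * (a + b - 2) := by
  rcases a with _ | a
  · simp
  rcases b with _ | b
  · simp
  rw [mul_add, ← mul_assoc, ← mul_assoc, two_mul_choose_two, two_mul_choose_two,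
    show a + 1 + (b + 1) - 2 = a + b by omega]
  simp only [add_tsub_cancel_right]
  ring

theorem mul_tsub_le_half_mul_half {r n : ℕ} (h : r ≤ n) :
    r * (n - r) ≤ (n + 1) / 2 * (n / 2) := by
  obtain ⟨s, rfl⟩ := exists_add_of_le h
  rw [add_tsub_cancel_left]
  have hsum : (r + s + 1) / 2 + (r + s) / 2 = r + s := by omega
  have hhalf : (r + s) / 2 ≤ (r + s + 1) / 2 ∧ (r + s + 1) / 2 ≤ (r + s) / 2 + 1 := by omega
  generalize (r + s + 1) / 2 = a, (r + s) / 2 = b at hsum hhalf ⊢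
  -- `a b - r s = (r - a) (r - b)`, and no integer lies strictly between `b` and `a`.
  rcases (by omega : a ≤ r ∨ r ≤ b) with hr | hr <;> nlinarith

theorem two_mul_choose_two_mul_tsub_le {r n : ℕ} (h : r ≤ n) :
    2 * (r.choose 2 * (n - r)) ≤ (n + 1) / 2 * (n / 2) * (r - 1) :=
  calc 2 * (r.choose 2 * (n - r)) = r * (n - r) * (r - 1) := by
        rw [← mul_assoc, two_mul_choose_two]; ring
    _ ≤ (n + 1) / 2 * (n / 2) * (r - 1) := Nat.mul_le_mul_right _ (mul_tsub_le_half_mul_half h)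

end Nat

namespace Finset

variable {ι : Type*} (s : Finset ι) (r : ι → ℕ)

theorem sum_tsub_one_add_card_filter_ne_zero :
    ∑ i ∈ s, (r i - 1) + #{i ∈ s | r i ≠ 0} = ∑ i ∈ s, r i := by
  rw [card_filter, ← sum_add_distrib]
  refine sum_congr rfl fun i _ => ?_
  split_ifs <;> omega

variable {s r}

theorem eq_sum_of_card_filter_ne_zero_le_one (h : #{i ∈ s | r i ≠ 0} ≤ 1) {i : ι} (hi : i ∈ s)
    (hri : r i ≠ 0) : r i = ∑ j ∈ s, r j := by
  refine (sum_eq_single i (fun j hj hji => ?_) (absurd hi)).symm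
  by_contra hrj
  exact hji (card_le_one.mp h j (by simp [hj, hrj]) i (by simp [hi, hri]))

end Finset

/-- For any value distribution (r_1,…,r_L) summing to n, the conflict-triangle count
Σ_j C(r_j,2)(n − r_j) is at most that of a split into groups of sizes ⌈n/2⌉, ⌊n/2⌋. -/
theorem conflict_sum_le_balanced_split
    (n L : ℕ) (r : Fin L → ℕ) (hr : ∑ j, r j = n) :
    ∑ j, (r j).choose 2 * (n - r j) ≤
      ((n + 1) / 2).choose 2 * (n / 2) + (n / 2).choose 2 * ((n + 1) / 2) := by
  have hle : ∀ j, r j ≤ n := fun j => hr ▸ single_le_sum (fun _ _ => Nat.zero_le _) (mem_univ j)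
  rcases le_or_gt #{j | r j ≠ 0} 1 with hsupp | hsupp
  · refine (sum_eq_zero fun j _ => ?_).trans_le (Nat.zero_le _)
    by_cases hrj : r j = 0
    · simp [hrj]
    · simp [eq_sum_of_card_filter_ne_zero_le_one hsupp (mem_univ j) hrj, hr]
  · have hpred_sum : ∑ j, (r j - 1) ≤ n - 2 := by
      have := sum_tsub_one_add_card_filter_ne_zero univ r
      omega
    have hbal := Nat.two_mul_choose_two_mul_add_choose_two_mul ((n + 1) / 2) (n / 2)
    rw [show (n + 1) / 2 + n / 2 = n by omega] at hbal
    suffices 2 * ∑ j, (r j).choose 2 * (n - r j) ≤ (n + 1) / 2 * (n / 2) * (n - 2) by omega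
    calc 2 * ∑ j, (r j).choose 2 * (n - r j)
        ≤ ∑ j, (n + 1) / 2 * (n / 2) * (r j - 1) := by
          rw [mul_sum]
          exact sum_le_sum fun j _ => Nat.two_mul_choose_two_mul_tsub_le (hle j)
      _ = (n + 1) / 2 * (n / 2) * ∑ j, (r j - 1) := (mul_sum ..).symm
      _ ≤ (n + 1) / 2 * (n / 2) * (n - 2) := Nat.mul_le_mul_left _ hpred_sum
end

section
/- Let T be a team of size n, f a feature with value counts r_v, and let a new individual i with feature value v be added to T. Then the number of conflict triangles of T ∪ {i} for f equals the number of conflict triangles of T for f plus r_v·(n − r_v) + Σ_{w ≠ v} C(r_w, 2). -/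
/-!
A conflict triangle of `insert i T` either avoids `i`, and is then a conflict triangle of `T`,
or is `insert i s` for a pair `s ⊆ T`. Such a pair completes a conflict triangle exactly when
one member has value `f i` and the other does not (`r_v (n - r_v)` pairs), or when both members
share a value `w ≠ f i` (`∑_{w ≠ v} C(r_w, 2)` pairs).
-/

open Classical Finset

/-- A 3-subset τ is a conflict triangle for feature f: exactly two members share their f-value. -/
def isConflict {α V : Type*} (f : α → V) (τ : Finset α) : Prop :=
  ∃ i ∈ τ, ∃ j ∈ τ, ∃ k ∈ τ, i ≠ j ∧ i ≠ k ∧ j ≠ k ∧ f i = f j ∧ f k ≠ f i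

/-- Number of conflict triangles of team T for feature f. -/
noncomputable def conflictCount {α V : Type*} (T : Finset α) (f : α → V) : ℕ :=
  ((T.powersetCard 3).filter (fun τ => isConflict f τ)).card

section

variable {α V : Type*}

lemma card_filter_powersetCard_succ_insert {s : Finset α} {a : α} (ha : a ∉ s) (n : ℕ)
    (p : Finset α → Prop) :
    #{t ∈ (insert a s).powersetCard (n + 1) | p t} =
      #{t ∈ s.powersetCard (n + 1) | p t} + #{t ∈ s.powersetCard n | p (insert a t)} := by
  have hdisj : Disjoint {t ∈ s.powersetCard (n + 1) | p t}
      ({t ∈ s.powersetCard n | p (insert a t)}.image (insert a)) := by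
    refine disjoint_left.2 fun t ht ht' => ?_
    obtain ⟨u, -, rfl⟩ := mem_image.1 ht'
    exact ha ((mem_powersetCard.1 (mem_filter.1 ht).1).1 (mem_insert_self a u))
  rw [powersetCard_succ_insert ha, filter_union, filter_image, card_union_of_disjoint hdisj,
    card_image_of_injOn]
  intro t ht u hu htu
  have hat : a ∉ t := fun hat => ha ((mem_powersetCard.1 (mem_filter.1 ht).1).1 hat)
  have hau : a ∉ u := fun hau => ha ((mem_powersetCard.1 (mem_filter.1 hu).1).1 hau)
  rw [← erase_insert hat, htu, erase_insert hau]

lemma card_image_pair_product {A B : Finset α} (h : Disjoint A B) :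
    #((A ×ˢ B).image fun p => ({p.1, p.2} : Finset α)) = #A * #B := by
  rw [card_image_of_injOn, card_product]
  rintro ⟨a, b⟩ hab ⟨c, d⟩ hcd hpair
  simp only [coe_product, Set.mem_prod, mem_coe] at hab hcd hpair
  have ha : a ∈ ({c, d} : Finset α) := hpair ▸ mem_insert_self a {b}
  have hb : b ∈ ({c, d} : Finset α) := hpair ▸ mem_insert_of_mem (mem_singleton_self b)
  rw [mem_insert, mem_singleton] at ha hb
  have had : a ≠ d := fun had => disjoint_left.1 h hab.1 (had ▸ hcd.2)
  have hbc : b ≠ c := fun hbc => disjoint_left.1 h (hbc ▸ hcd.1) hab.2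
  rw [ha.resolve_right had, hb.resolve_left hbc]

lemma card_biUnion_powersetCard_fiber (T : Finset α) (f : α → V) (W : Finset V) {k : ℕ}
    (hk : k ≠ 0) :
    #(W.biUnion fun w => {j ∈ T | f j = w}.powersetCard k) =
      ∑ w ∈ W, (#{j ∈ T | f j = w}).choose k := by
  rw [card_biUnion]
  · exact sum_congr rfl fun w _ => card_powersetCard k _
  intro w _ w' _ hww'
  refine disjoint_left.2 fun s hs hs' => ?_
  obtain ⟨x, hx⟩ := card_pos.1 ((mem_powersetCard.1 hs).2.symm ▸ Nat.pos_of_ne_zero hk)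
  exact hww' (((mem_filter.1 ((mem_powersetCard.1 hs).1 hx)).2).symm.trans
    (mem_filter.1 ((mem_powersetCard.1 hs').1 hx)).2)

lemma isConflict_triple_iff (f : α → V) {i j k : α} (hij : i ≠ j) (hik : i ≠ k) (hjk : j ≠ k) :
    isConflict f {i, j, k} ↔
      (f j = f i ∧ f k ≠ f i) ∨ (f k = f i ∧ f j ≠ f i) ∨ (f j = f k ∧ f j ≠ f i) := by
  constructor
  · rintro ⟨a, ha, b, hb, c, hc, hab, hac, hbc, h1, h2⟩
    simp only [mem_insert, mem_singleton] at ha hb hc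
    rcases ha with rfl | rfl | rfl <;> rcases hb with rfl | rfl | rfl <;>
      rcases hc with rfl | rfl | rfl <;> simp_all <;> tauto
  · rintro (⟨h1, h2⟩ | ⟨h1, h2⟩ | ⟨h1, h2⟩)
    · exact ⟨i, by simp, j, by simp, k, by simp, hij, hik, hjk, h1.symm, h2⟩
    · exact ⟨i, by simp, k, by simp, j, by simp, hik, hij, hjk.symm, h1.symm, h2⟩
    · exact ⟨j, by simp, k, by simp, i, by simp, hjk, hij.symm, hik.symm, h1, Ne.symm h2⟩

lemma filter_isConflict_insert_eq {T : Finset α} (f : α → V) {i : α} (hi : i ∉ T) :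
    {s ∈ T.powersetCard 2 | isConflict f (insert i s)} =
      ({j ∈ T | f j = f i} ×ˢ {j ∈ T | f j ≠ f i}).image (fun p => ({p.1, p.2} : Finset α)) ∪
        ((T.image f).erase (f i)).biUnion fun w => {j ∈ T | f j = w}.powersetCard 2 := by
  ext s
  simp only [mem_union, mem_filter, mem_powersetCard, mem_image, mem_biUnion, mem_product,
    mem_erase, Prod.exists]
  constructor
  · rintro ⟨⟨hsT, hs⟩, hconf⟩
    obtain ⟨j, k, hjk, rfl⟩ := card_eq_two.1 hs
    have hj : j ∈ T := hsT (by simp)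
    have hk : k ∈ T := hsT (by simp)
    have hij : i ≠ j := (ne_of_mem_of_not_mem hj hi).symm
    have hik : i ≠ k := (ne_of_mem_of_not_mem hk hi).symm
    rcases (isConflict_triple_iff f hij hik hjk).1 hconf with
      ⟨hj', hk'⟩ | ⟨hk', hj'⟩ | ⟨hjk', hj'⟩
    · exact Or.inl ⟨j, k, ⟨⟨hj, hj'⟩, hk, hk'⟩, rfl⟩
    · exact Or.inl ⟨k, j, ⟨⟨hk, hk'⟩, hj, hj'⟩, pair_comm k j⟩
    · refine Or.inr ⟨f j, ⟨hj', j, hj, rfl⟩, ?_, card_pair hjk⟩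
      simp [insert_subset_iff, hj, hk, hjk']
  · rintro (⟨j, k, ⟨⟨hj, hj'⟩, hk, hk'⟩, rfl⟩ | ⟨w, ⟨hw, -⟩, hsw, hs⟩)
    · have hjk : j ≠ k := fun h => hk' (h ▸ hj')
      have hij : i ≠ j := (ne_of_mem_of_not_mem hj hi).symm
      have hik : i ≠ k := (ne_of_mem_of_not_mem hk hi).symm
      refine ⟨⟨by simp [insert_subset_iff, hj, hk], card_pair hjk⟩, ?_⟩
      exact (isConflict_triple_iff f hij hik hjk).2
        (Or.inl ⟨hj', hk'⟩)
    · obtain ⟨j, k, hjk, rfl⟩ := card_eq_two.1 hs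
      simp only [insert_subset_iff, singleton_subset_iff, mem_filter] at hsw
      obtain ⟨⟨hj, rfl⟩, hk, hkj⟩ := hsw
      have hij : i ≠ j := (ne_of_mem_of_not_mem hj hi).symm
      have hik : i ≠ k := (ne_of_mem_of_not_mem hk hi).symm
      refine ⟨⟨by simp [insert_subset_iff, hj, hk], card_pair hjk⟩, ?_⟩
      exact (isConflict_triple_iff f hij hik hjk).2
        (Or.inr (Or.inr ⟨hkj.symm, hw⟩))

lemma card_filter_isConflict_insert {T : Finset α} (f : α → V) {i : α} (hi : i ∉ T) :
    #{s ∈ T.powersetCard 2 | isConflict f (insert i s)} =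
      #{j ∈ T | f j = f i} * #{j ∈ T | f j ≠ f i} +
        ∑ w ∈ (T.image f).erase (f i), (#{j ∈ T | f j = w}).choose 2 := by
  have hdisj : Disjoint
      (({j ∈ T | f j = f i} ×ˢ {j ∈ T | f j ≠ f i}).image fun p => ({p.1, p.2} : Finset α))
      (((T.image f).erase (f i)).biUnion fun w => {j ∈ T | f j = w}.powersetCard 2) := by
    refine disjoint_left.2 fun s hcross hmono => ?_
    obtain ⟨⟨j, k⟩, hjk, rfl⟩ := mem_image.1 hcross
    obtain ⟨w, hw, hsw⟩ := mem_biUnion.1 hmono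
    have hj : f j = f i := (mem_filter.1 (mem_product.1 hjk).1).2
    have hj' : f j = w := (mem_filter.1 ((mem_powersetCard.1 hsw).1 (mem_insert_self j {k}))).2
    exact ne_of_mem_erase hw (hj' ▸ hj)
  rw [filter_isConflict_insert_eq f hi, card_union_of_disjoint hdisj,
    card_image_pair_product (disjoint_filter_filter_not T T _),
    card_biUnion_powersetCard_fiber T f _ two_ne_zero]

end

/-- Adding an individual i with value f i = v to a team T of size n increases the
conflict-triangle count by r_v·(n − r_v) + Σ_{w ≠ v} C(r_w,2). -/
theorem conflictCount_insert
    {α V : Type*} (T : Finset α) (f : α → V) (i : α) (hi : i ∉ T)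
    (n : ℕ) (hn : T.card = n) :
    conflictCount (insert i T) f =
      conflictCount T f +
        ((T.filter (fun j => f j = f i)).card *
            (n - (T.filter (fun j => f j = f i)).card) +
          ∑ w ∈ (T.image f).erase (f i),
            ((T.filter (fun j => f j = w)).card.choose 2)) := by
  have hcompl : #{j ∈ T | f j ≠ f i} = n - #{j ∈ T | f j = f i} := by
    simp only [ne_eq]
    rw [← hn, ← card_filter_add_card_filter_not (s := T) (fun j => f j = f i),
      Nat.add_sub_cancel_left]
  rw [conflictCount, conflictCount, card_filter_powersetCard_succ_insert hi 2,
    card_filter_isConflict_insert f hi, hcompl]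
end

section
/- Let G' be a graph on vertex set V, and for each edge e = {u,v} of G' define a feature f_e on V taking one value on {u,v} and a distinct value on each other vertex. Consider a partition of V into teams each of size k ≥ 3. Then for each team S and each edge e of G', the number of conflict triangles of S for f_e equals (k − 2) if both endpoints of e lie in S, and 0 otherwise; hence the total faultline potential (sum over teams and features of conflict-triangle counts) equals (k − 2) times the number of edges of G' with both endpoints in the same team. -/
/-!
For the feature of an edge `{u, v}` the only two distinct vertices with equal values are `u` and
`v`, so a 3-subset is a conflict triangle exactly when it contains both of them. A team `S`
containing `u` and `v` therefore has one conflict triangle `{u, v, w}` for each of the `#S - 2`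
remaining members `w`, and since teams are disjoint each edge is counted in at most one team.
-/

open Classical Finset

section UniqueCollision

variable {α W : Type*} [DecidableEq α] {f : α → W} {u v : α}

lemma isConflict_iff_pair_subset (huv : u ≠ v) (hfuv : f u = f v)
    (hcoll : ∀ i j, i ≠ j → f i = f j → s(i, j) = s(u, v)) {τ : Finset α} (hτ : #τ = 3) :
    isConflict f τ ↔ {u, v} ⊆ τ := by
  constructor
  · rintro ⟨i, hi, j, hj, -, -, hij, -, -, hfij, -⟩
    have hpair : s(u, v) = s(i, j) := (hcoll i j hij hfij).symm
    rw [insert_subset_iff, singleton_subset_iff]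
    constructor
    · rcases Sym2.mem_iff.mp (hpair ▸ Sym2.mem_mk_left u v) with rfl | rfl <;> assumption
    · rcases Sym2.mem_iff.mp (hpair ▸ Sym2.mem_mk_right u v) with rfl | rfl <;> assumption
  · intro hsub
    obtain ⟨w, hwτ, hwuv⟩ := exists_mem_notMem_of_card_lt_card
      (show #({u, v} : Finset α) < #τ by rw [card_pair huv, hτ]; omega)
    simp only [mem_insert, mem_singleton, not_or] at hwuv
    refine ⟨u, hsub (by simp), v, hsub (by simp), w, hwτ, huv, Ne.symm hwuv.1, Ne.symm hwuv.2,
      hfuv, fun hfwu => ?_⟩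
    have hwu := hcoll w u hwuv.1 hfwu
    rw [Sym2.eq_iff] at hwu
    tauto

lemma conflictCount_eq_of_unique_collision (huv : u ≠ v) (hfuv : f u = f v)
    (hcoll : ∀ i j, i ≠ j → f i = f j → s(i, j) = s(u, v)) (S : Finset α) :
    conflictCount S f = if u ∈ S ∧ v ∈ S then #S - 2 else 0 := by
  have hfilter : (S.powersetCard 3).filter (isConflict f) =
      (S.powersetCard 3).filter ({u, v} ⊆ ·) :=
    filter_congr fun τ hτ => isConflict_iff_pair_subset huv hfuv hcoll (mem_powersetCard.mp hτ).2
  have hpairS : {u, v} ⊆ S ↔ u ∈ S ∧ v ∈ S := by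
    rw [insert_subset_iff, singleton_subset_iff]
  rw [conflictCount, hfilter]
  split_ifs with hS <;> rw [← hpairS] at hS
  · rw [card_filter_powersetCard_subset _ _ _ hS (by rw [card_pair huv]; omega), card_pair huv]
    simp
  · refine card_eq_zero.mpr (filter_eq_empty_iff.mpr fun τ hτ hτuv => hS ?_)
    exact hτuv.trans (mem_powersetCard.mp hτ).1

end UniqueCollision

lemma Sym2.mk_eq_of_feature_eq {α W : Type*} {f : α → W} {u v : α} (hfuv : f u = f v)
    (hout : ∀ w ∉ s(u, v), f w ≠ f u)
    (hsep : ∀ w w', w ∉ s(u, v) → w' ∉ s(u, v) → w ≠ w' → f w ≠ f w')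
    {i j : α} (hij : i ≠ j) (hf : f i = f j) : s(i, j) = s(u, v) := by
  have hfe : ∀ x ∈ s(u, v), f x = f u := fun x hx => by
    rcases Sym2.mem_iff.mp hx with rfl | rfl
    exacts [rfl, hfuv.symm]
  by_cases hi : i ∈ s(u, v) <;> by_cases hj : j ∈ s(u, v)
  · exact ((Sym2.mem_and_mem_iff hij).mp ⟨hi, hj⟩).symm
  · exact absurd (hf.symm.trans (hfe i hi)) (hout j hj)
  · exact absurd (hf.trans (hfe j hj)) (hout i hi)
  · exact absurd hf (hsep i j hi hj hij)

lemma sum_ite_pair_mem_of_pairwiseDisjoint {α M : Type*} [DecidableEq α] [AddCommMonoid M]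
    {P : Finset (Finset α)} (hP : (P : Set (Finset α)).PairwiseDisjoint id) (u v : α) (c : M) :
    ∑ S ∈ P, (if u ∈ S ∧ v ∈ S then c else 0) = if ∃ S ∈ P, u ∈ S ∧ v ∈ S then c else 0 := by
  split_ifs with h
  · obtain ⟨S₀, hS₀, hu₀, hv₀⟩ := h
    rw [sum_eq_single_of_mem S₀ hS₀ fun S hS hne => if_neg fun huv =>
      disjoint_left.mp (hP hS hS₀ hne) huv.1 hu₀, if_pos ⟨hu₀, hv₀⟩]
  · exact sum_eq_zero fun S hS => if_neg fun huv => h ⟨S, hS, huv⟩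

theorem faultline_reduction_general
    {V W : Type*} [Fintype V] [DecidableEq V]
    (G : SimpleGraph V) [DecidableRel G.Adj]
    (F : Sym2 V → V → W)
    (hF : ∀ e ∈ G.edgeFinset, ∀ u v : V, e = s(u, v) →
      F e u = F e v ∧ (∀ w : V, w ∉ e → F e w ≠ F e u) ∧
        (∀ w w' : V, w ∉ e → w' ∉ e → w ≠ w' → F e w ≠ F e w'))
    (P : Finset (Finset V)) (k : ℕ)
    (hcard : ∀ S ∈ P, S.card = k)
    (hpart : ∀ x : V, ∃! S, S ∈ P ∧ x ∈ S) :
    (∀ S ∈ P, ∀ e ∈ G.edgeFinset, ∀ u v : V, e = s(u, v) →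
      conflictCount S (F e) = if u ∈ S ∧ v ∈ S then k - 2 else 0) ∧
    ∑ S ∈ P, ∑ e ∈ G.edgeFinset, conflictCount S (F e) =
      (k - 2) * (G.edgeFinset.filter (fun e => ∃ S ∈ P, ∀ x ∈ e, x ∈ S)).card := by
  have per_team : ∀ S ∈ P, ∀ e ∈ G.edgeFinset, ∀ u v : V, e = s(u, v) →
      conflictCount S (F e) = if u ∈ S ∧ v ∈ S then k - 2 else 0 := by
    rintro S hS e he u v rfl
    obtain ⟨hfuv, hout, hsep⟩ := hF _ he u v rfl
    have huv : u ≠ v := (G.mem_edgeFinset.mp he).ne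
    rw [conflictCount_eq_of_unique_collision huv hfuv
      (fun _ _ => Sym2.mk_eq_of_feature_eq hfuv hout hsep), hcard S hS]
  have hP : (P : Set (Finset V)).PairwiseDisjoint id := fun S hS T hT hST =>
    disjoint_left.mpr fun x hxS hxT => hST ((hpart x).unique ⟨hS, hxS⟩ ⟨hT, hxT⟩)
  have per_edge : ∀ e ∈ G.edgeFinset, ∑ S ∈ P, conflictCount S (F e) =
      if ∃ S ∈ P, ∀ x ∈ e, x ∈ S then k - 2 else 0 := by
    intro e he
    induction e using Sym2.ind with
    | _ u v =>
      simp only [Sym2.ball]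
      rw [sum_congr rfl fun S hS => per_team S hS _ he u v rfl]
      exact sum_ite_pair_mem_of_pairwiseDisjoint hP u v (k - 2)
  refine ⟨per_team, ?_⟩
  rw [sum_comm, sum_congr rfl per_edge, ← sum_filter, sum_const, smul_eq_mul, mul_comm]

/-- Faultline reduction: with one feature per edge (endpoints share a value, all
other vertices get unique values), each team S contributes k−2 conflict triangles
per edge inside S and 0 otherwise; the total faultline potential is (k−2) times the
number of edges with both endpoints in the same team. -/
theorem faultline_reduction
    {V W : Type*} [Fintype V] [DecidableEq V]
    (G : SimpleGraph V) [DecidableRel G.Adj]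
    (F : Sym2 V → V → W)
    (hF : ∀ e ∈ G.edgeFinset, ∀ u v : V, e = s(u, v) →
      F e u = F e v ∧ (∀ w : V, w ∉ e → F e w ≠ F e u) ∧
        (∀ w w' : V, w ∉ e → w' ∉ e → w ≠ w' → F e w ≠ F e w'))
    (P : Finset (Finset V)) (k : ℕ) (hk : 3 ≤ k)
    (hcard : ∀ S ∈ P, S.card = k)
    (hpart : ∀ x : V, ∃! S, S ∈ P ∧ x ∈ S) :
    (∀ S ∈ P, ∀ e ∈ G.edgeFinset, ∀ u v : V, e = s(u, v) →
      conflictCount S (F e) = if u ∈ S ∧ v ∈ S then k - 2 else 0) ∧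
    ∑ S ∈ P, ∑ e ∈ G.edgeFinset, conflictCount S (F e) =
      (k - 2) * (G.edgeFinset.filter (fun e => ∃ S ∈ P, ∀ x ∈ e, x ∈ S)).card :=
  faultline_reduction_general G F hF P k hcard hpart
end

section
/- With the edge-features construction (one feature per edge of a graph G', where the feature assigns the two endpoints a shared value and all other vertices unique values), a partition of the vertices into teams of size k ≥ 3 has total faultline potential equal to zero if and only if every team is an independent set in G'. -/
/-!
A conflict triangle for the feature of an edge `uv` must contain two vertices with equal value,
and the only such pair is `u, v`; so a team carries a conflict for that feature only if it
contains both endpoints. Conversely, if it does, any third member `w` of the team (teams have at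
least three members) has a value different from the shared one, and `{u, v, w}` is a conflict.
-/

open Classical Finset

section ConflictCount

variable {α W : Type*} {T : Finset α} {f : α → W}

theorem conflictCount_eq_zero_iff :
    conflictCount T f = 0 ↔ ∀ τ ⊆ T, τ.card = 3 → ¬ isConflict f τ := by
  simp only [conflictCount, card_eq_zero, filter_eq_empty_iff, mem_powersetCard, and_imp]

theorem conflictCount_ne_zero {i j m : α} (hi : i ∈ T) (hj : j ∈ T) (hm : m ∈ T)
    (hij : i ≠ j) (him : i ≠ m) (hjm : j ≠ m) (hfij : f i = f j) (hfm : f m ≠ f i) :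
    conflictCount T f ≠ 0 := by
  rw [Ne, conflictCount_eq_zero_iff, not_forall]
  refine ⟨{i, j, m}, ?_⟩
  simp only [Classical.not_imp, not_not]
  refine ⟨?_, card_eq_three.2 ⟨i, j, m, hij, him, hjm, rfl⟩, ?_⟩
  · simp [insert_subset_iff, hi, hj, hm]
  · exact ⟨i, by simp, j, by simp, m, by simp, hij, him, hjm, hfij, hfm⟩

end ConflictCount

structure IsEdgeFeature {V W : Type*} (f : V → W) (u v : V) : Prop where
  apply_left_eq_apply_right : f u = f v
  apply_ne_of_notMem : ∀ w : V, w ∉ s(u, v) → f w ≠ f u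
  injOn_compl : ∀ w w' : V, w ∉ s(u, v) → w' ∉ s(u, v) → w ≠ w' → f w ≠ f w'

namespace IsEdgeFeature

variable {V W : Type*} {f : V → W} {u v : V}

theorem apply_eq_iff_mem (hf : IsEdgeFeature f u v) {w : V} : f w = f u ↔ w ∈ s(u, v) := by
  refine ⟨fun h => by_contra fun hw => hf.apply_ne_of_notMem w hw h, fun hw => ?_⟩
  rcases Sym2.mem_iff.1 hw with rfl | rfl
  exacts [rfl, hf.apply_left_eq_apply_right.symm]

theorem mem_of_apply_eq (hf : IsEdgeFeature f u v) {i j : V} (hij : i ≠ j) (hfij : f i = f j) :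
    i ∈ s(u, v) ∧ j ∈ s(u, v) := by
  by_cases hi : i ∈ s(u, v)
  · exact ⟨hi, hf.apply_eq_iff_mem.1 (hfij.symm.trans (hf.apply_eq_iff_mem.2 hi))⟩
  · by_cases hj : j ∈ s(u, v)
    · exact absurd (hfij.trans (hf.apply_eq_iff_mem.2 hj)) (hf.apply_ne_of_notMem i hi)
    · exact absurd hfij (hf.injOn_compl i j hi hj hij)

theorem mem_of_isConflict (hf : IsEdgeFeature f u v) {τ : Finset V} (hτ : isConflict f τ) :
    u ∈ τ ∧ v ∈ τ := by
  obtain ⟨i, hi, j, hj, -, -, hij, -, -, hfij, -⟩ := hτ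
  obtain ⟨hie, hje⟩ := hf.mem_of_apply_eq hij hfij
  rcases Sym2.mem_iff.1 hie with rfl | rfl <;> rcases Sym2.mem_iff.1 hje with rfl | rfl
  exacts [absurd rfl hij, ⟨hi, hj⟩, ⟨hj, hi⟩, absurd rfl hij]

theorem conflictCount_eq_zero_iff (hf : IsEdgeFeature f u v) (huv : u ≠ v)
    {T : Finset V} (hT : 3 ≤ T.card) : conflictCount T f = 0 ↔ ¬ (u ∈ T ∧ v ∈ T) := by
  refine ⟨fun h ⟨hu, hv⟩ => ?_, fun h => ?_⟩
  · obtain ⟨w, hw, hwuv⟩ : ∃ w ∈ T, w ∉ ({u, v} : Finset V) :=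
      exists_mem_notMem_of_card_lt_card (card_le_two.trans_lt hT)
    have hwe : w ∉ s(u, v) := by simpa using hwuv
    exact conflictCount_ne_zero hu hv hw huv (fun h => hwe (h ▸ Sym2.mem_mk_left u v))
      (fun h => hwe (h ▸ Sym2.mem_mk_right u v)) hf.apply_left_eq_apply_right
      (hf.apply_ne_of_notMem w hwe) h
  · exact _root_.conflictCount_eq_zero_iff.2 fun τ hτT _ hτ =>
      h ((hf.mem_of_isConflict hτ).imp (hτT ·) (hτT ·))

end IsEdgeFeature

theorem faultline_zero_iff_independent_general
    {V W : Type*} [Fintype V] [DecidableEq V]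
    (G : SimpleGraph V) [DecidableRel G.Adj]
    (F : Sym2 V → V → W)
    (hF : ∀ e ∈ G.edgeFinset, ∀ u v : V, e = s(u, v) →
      F e u = F e v ∧ (∀ w : V, w ∉ e → F e w ≠ F e u) ∧
        (∀ w w' : V, w ∉ e → w' ∉ e → w ≠ w' → F e w ≠ F e w'))
    (P : Finset (Finset V)) (k : ℕ) (hk : 3 ≤ k)
    (hcard : ∀ S ∈ P, S.card = k) :
    (∑ S ∈ P, ∑ e ∈ G.edgeFinset, conflictCount S (F e)) = 0 ↔
      ∀ S ∈ P, ∀ u ∈ S, ∀ v ∈ S, ¬ G.Adj u v := by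
  have key : ∀ S ∈ P, ∀ u v : V, G.Adj u v →
      (conflictCount S (F s(u, v)) = 0 ↔ ¬ (u ∈ S ∧ v ∈ S)) := by
    intro S hS u v huv
    obtain ⟨h₁, h₂, h₃⟩ := hF _ (G.mem_edgeFinset.2 huv) u v rfl
    exact IsEdgeFeature.conflictCount_eq_zero_iff ⟨h₁, h₂, h₃⟩ huv.ne (hk.trans (hcard S hS).ge)
  simp only [sum_eq_zero_iff]
  refine forall₂_congr fun S hS => ⟨fun h u hu v hv huv => ?_, fun h e he => ?_⟩
  · exact (key S hS u v huv).1 (h _ (G.mem_edgeFinset.2 huv)) ⟨hu, hv⟩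
  · induction e using Sym2.ind with
    | _ u v =>
      have huv : G.Adj u v := G.mem_edgeFinset.1 he
      exact (key S hS u v huv).2 fun ⟨hu, hv⟩ => h u hu v hv huv

/-- With the edge-features construction, the total faultline potential of a
partition into teams of size k ≥ 3 is zero iff every team is an independent set. -/
theorem faultline_zero_iff_independent
    {V W : Type*} [Fintype V] [DecidableEq V]
    (G : SimpleGraph V) [DecidableRel G.Adj]
    (F : Sym2 V → V → W)
    (hF : ∀ e ∈ G.edgeFinset, ∀ u v : V, e = s(u, v) →
      F e u = F e v ∧ (∀ w : V, w ∉ e → F e w ≠ F e u) ∧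
        (∀ w w' : V, w ∉ e → w' ∉ e → w ≠ w' → F e w ≠ F e w'))
    (P : Finset (Finset V)) (k : ℕ) (hk : 3 ≤ k)
    (hcard : ∀ S ∈ P, S.card = k)
    (hpart : ∀ x : V, ∃! S, S ∈ P ∧ x ∈ S) :
    (∑ S ∈ P, ∑ e ∈ G.edgeFinset, conflictCount S (F e)) = 0 ↔
      ∀ S ∈ P, ∀ u ∈ S, ∀ v ∈ S, ¬ G.Adj u v :=
  faultline_zero_iff_independent_general G F hF P k hk hcard
end
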